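/- Let X, Y, Z be real Hilbert spaces, D ⊆ X a nonempty, bounded, closed, convex subset, L : dom L ⊆ X → Z a closed linear operator (i.e., with closed graph) with D ∩ dom L ≠ ∅, and F : D → Y weakly sequentially closed. Then for every v ∈ Y and every λ > 0 the Tikhonov functional T_{v,λ} attains its minimum, i.e., there exists μ* ∈ D ∩ dom L with T_{v,λ}(μ*) ≤ T_{v,λ}(μ) for all μ ∈ X. -/

import Mathlib

open Filter MeasureTheory
open scoped RealInnerProductSpace ENNReal

attribute [local instance] Classical.propDecidable

/-- A sequence `x` in a real inner-product space converges weakly to `l`. -/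
def WeakTendsto {X : Type*} [NormedAddCommGroup X] [InnerProductSpace ℝ X]
    (x : ℕ → X) (l : X) : Prop :=
  ∀ w : X, Tendsto (fun n => ⟪w, x n⟫) atTop (nhds ⟪w, l⟫)

/-- `F : D → Y` is weakly sequentially closed: whenever `μₙ ∈ D`, `μₙ ⇀ μ` weakly in `X`
and `F(μₙ) ⇀ y` weakly in `Y`, one has `μ ∈ D` and `F(μ) = y`. -/
def WeaklySeqClosedOn {X Y : Type*}
    [NormedAddCommGroup X] [InnerProductSpace ℝ X]
    [NormedAddCommGroup Y] [InnerProductSpace ℝ Y]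
    (F : X → Y) (D : Set X) : Prop :=
  ∀ (μs : ℕ → X) (μ : X) (y : Y), (∀ n, μs n ∈ D) →
    WeakTendsto μs μ → WeakTendsto (fun n => F (μs n)) y → μ ∈ D ∧ F μ = y

/-- The Tikhonov functional `T_{v,λ} : X → ℝ ∪ {∞}`,
`T_{v,λ}(μ) = (1/2)‖F(μ) − v‖² + (λ/2)‖Lμ‖²` for `μ ∈ D ∩ dom L`, and `∞` otherwise. -/
noncomputable def tikhonovFunctional {X Y Z : Type*}
    [NormedAddCommGroup X] [InnerProductSpace ℝ X]
    [NormedAddCommGroup Y] [InnerProductSpace ℝ Y]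
    [NormedAddCommGroup Z] [InnerProductSpace ℝ Z]
    (D : Set X) (domL : Submodule ℝ X) (L : domL →ₗ[ℝ] Z)
    (F : X → Y) (v : Y) (lam : ℝ) (μ : X) : ℝ≥0∞ :=
  if h : μ ∈ D ∧ μ ∈ domL then
    ENNReal.ofReal ((1 / 2) * ‖F μ - v‖ ^ 2 + (lam / 2) * ‖L ⟨μ, h.2⟩‖ ^ 2)
  else ⊤

lemma WeakTendsto.subseq {X : Type*} [NormedAddCommGroup X] [InnerProductSpace ℝ X]
    {x : ℕ → X} {l : X} (h : WeakTendsto x l) {φ : ℕ → ℕ} (hφ : StrictMono φ) :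
    WeakTendsto (fun n => x (φ n)) l :=
  fun w => (h w).comp hφ.tendsto_atTop

lemma exists_weak_subseq {X : Type*} [NormedAddCommGroup X] [InnerProductSpace ℝ X]
    [CompleteSpace X] (x : ℕ → X) (C : ℝ) (hC : ∀ n, ‖x n‖ ≤ C) :
    ∃ φ : ℕ → ℕ, StrictMono φ ∧ ∃ l : X, WeakTendsto (fun n => x (φ n)) l := by
  have hC0 : 0 ≤ C := le_trans (norm_nonneg _) (hC 0)
  -- Step 1: diagonal-type extraction via compactness of a product of intervals
  set g : ℕ → (ℕ → ℝ) := fun n m => ⟪x m, x n⟫ with hg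
  have hK : IsCompact (Set.pi Set.univ fun _ : ℕ => Set.Icc (-(C*C)) (C*C)) :=
    isCompact_univ_pi fun _ => isCompact_Icc
  have hgK : ∀ n, g n ∈ Set.pi Set.univ fun _ : ℕ => Set.Icc (-(C*C)) (C*C) := by
    intro n m _
    have h1 : |⟪x m, x n⟫| ≤ ‖x m‖ * ‖x n‖ := abs_real_inner_le_norm _ _
    have h2 : ‖x m‖ * ‖x n‖ ≤ C * C :=
      mul_le_mul (hC m) (hC n) (norm_nonneg _) hC0
    constructor
    · nlinarith [abs_nonneg ⟪x m, x n⟫, neg_abs_le ⟪x m, x n⟫]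
    · nlinarith [le_abs_self ⟪x m, x n⟫]
  obtain ⟨a, -, φ, hφ, hconv⟩ := hK.tendsto_subseq hgK
  set y : ℕ → X := fun n => x (φ n) with hy
  have hyC : ∀ n, ‖y n‖ ≤ C := fun n => hC _
  have hbase : ∀ m, Tendsto (fun n => ⟪x m, y n⟫) atTop (nhds (a m)) := by
    intro m
    exact (tendsto_pi_nhds.mp hconv) m
  -- Step 2: convergence of ⟪w, y n⟫ for w in the span of the range of x
  set S : Submodule ℝ X := Submodule.span ℝ (Set.range x) with hS
  have hspan : ∀ w ∈ S, ∃ r : ℝ, Tendsto (fun n => ⟪w, y n⟫) atTop (nhds r) := by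
    intro w hw
    induction hw using Submodule.span_induction with
    | mem u hu =>
      obtain ⟨m, rfl⟩ := hu
      exact ⟨a m, hbase m⟩
    | zero => exact ⟨0, by simpa using tendsto_const_nhds⟩
    | add u v _ _ hu hv =>
      obtain ⟨ru, hru⟩ := hu
      obtain ⟨rv, hrv⟩ := hv
      exact ⟨ru + rv, by simpa [inner_add_left] using hru.add hrv⟩
    | smul c u _ hu =>
      obtain ⟨ru, hru⟩ := hu
      exact ⟨c * ru, by simpa [inner_smul_left] using hru.const_mul c⟩
  -- Step 3: convergence for w in the closure M of the span
  set M : Submodule ℝ X := S.topologicalClosure with hM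
  have hMconv : ∀ w ∈ M, ∃ r : ℝ, Tendsto (fun n => ⟪w, y n⟫) atTop (nhds r) := by
    intro w hw
    have hcauchy : CauchySeq (fun n => ⟪w, y n⟫) := by
      rw [Metric.cauchySeq_iff]
      intro ε hε
      have hwcl : w ∈ closure (S : Set X) := hw
      obtain ⟨u, hu, hdu⟩ := Metric.mem_closure_iff.mp hwcl (ε / (3 * (C + 1)))
        (by positivity)
      obtain ⟨r, hr⟩ := hspan u hu
      obtain ⟨N, hN⟩ := Metric.cauchySeq_iff.mp hr.cauchySeq (ε / 3) (by positivity)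
      refine ⟨N, fun p hp q hq => ?_⟩
      have hwu : ∀ n, |⟪w - u, y n⟫| ≤ ε / (3 * (C + 1)) * C := by
        intro n
        calc |⟪w - u, y n⟫| ≤ ‖w - u‖ * ‖y n‖ := abs_real_inner_le_norm _ _
          _ ≤ ε / (3 * (C + 1)) * C := by
              apply mul_le_mul (le_of_lt ?_) (hyC n) (norm_nonneg _) (by positivity)
              rwa [dist_eq_norm] at hdu
      have hsmall : ε / (3 * (C + 1)) * C ≤ ε / 3 := by
        rw [div_mul_eq_mul_div, div_le_div_iff₀ (by positivity) (by norm_num)]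
        ring_nf
        nlinarith
      have h1 := hwu p
      have h2 := hwu q
      have h3 := hN p hp q hq
      rw [Real.dist_eq] at h3 ⊢
      have e1 : ⟪w, y p⟫ - ⟪w, y q⟫
          = ⟪w - u, y p⟫ + (⟪u, y p⟫ - ⟪u, y q⟫) - ⟪w - u, y q⟫ := by
        simp only [inner_sub_left]; ring
      rw [e1]
      calc |⟪w - u, y p⟫ + (⟪u, y p⟫ - ⟪u, y q⟫) - ⟪w - u, y q⟫|
          ≤ |⟪w - u, y p⟫| + |⟪u, y p⟫ - ⟪u, y q⟫| + |⟪w - u, y q⟫| := by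
            exact (abs_sub _ _).trans (by gcongr; exact abs_add_le _ _)
        _ < ε := by linarith
    exact cauchySeq_tendsto_of_complete hcauchy
  -- Step 4: convergence for all w via orthogonal projection
  haveI : CompleteSpace M := (Submodule.isClosed_topologicalClosure S).completeSpace_coe
  have hyM : ∀ n, y n ∈ M :=
    fun n => S.le_topologicalClosure (Submodule.subset_span ⟨φ n, rfl⟩)
  have hall : ∀ w : X, ∃ r : ℝ, Tendsto (fun n => ⟪w, y n⟫) atTop (nhds r) := by
    intro w
    set pw : X := (M.starProjection w : X) with hpw
    have hperp : w - pw ∈ Mᗮ := Submodule.sub_starProjection_mem_orthogonal w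
    have heq : ∀ n, ⟪w, y n⟫ = ⟪pw, y n⟫ := by
      intro n
      have h0 : ⟪y n, w - pw⟫ = 0 := (Submodule.mem_orthogonal M (w - pw)).mp hperp (y n) (hyM n)
      have : ⟪w - pw, y n⟫ = 0 := by rwa [real_inner_comm]
      have := this
      simp only [inner_sub_left] at this
      linarith
    obtain ⟨r, hr⟩ := hMconv pw (Submodule.starProjection_apply_mem M w)
    exact ⟨r, by simpa only [heq] using hr⟩
  -- Step 5: assemble the weak limit by Riesz representation
  choose r hr using hall
  have hbound : ∀ w, ‖r w‖ ≤ C * ‖w‖ := by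
    intro w
    have : Tendsto (fun n => |⟪w, y n⟫|) atTop (nhds |r w|) := (hr w).abs
    have hle : ∀ n, |⟪w, y n⟫| ≤ C * ‖w‖ := by
      intro n
      calc |⟪w, y n⟫| ≤ ‖w‖ * ‖y n‖ := abs_real_inner_le_norm _ _
        _ ≤ ‖w‖ * C := by exact mul_le_mul_of_nonneg_left (hyC n) (norm_nonneg _)
        _ = C * ‖w‖ := mul_comm _ _
    rw [Real.norm_eq_abs]
    exact le_of_tendsto this (Eventually.of_forall hle)
  have hradd : ∀ u v : X, r (u + v) = r u + r v := by
    intro u v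
    refine tendsto_nhds_unique ?_ ((hr u).add (hr v))
    simpa only [inner_add_left] using hr (u + v)
  have hrsmul : ∀ (c : ℝ) (u : X), r (c • u) = c * r u := by
    intro c u
    refine tendsto_nhds_unique ?_ ((hr u).const_mul c)
    simpa only [real_inner_smul_left] using hr (c • u)
  set f : X →L[ℝ] ℝ := LinearMap.mkContinuous
    { toFun := r, map_add' := hradd, map_smul' := hrsmul } C hbound with hf
  set l : X := (InnerProductSpace.toDual ℝ X).symm f with hl
  refine ⟨φ, hφ, l, fun w => ?_⟩
  have : ⟪w, l⟫ = r w := by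
    rw [real_inner_comm, InnerProductSpace.toDual_symm_apply]
    rfl
  rw [this]
  exact hr w


/-- Weak lower semicontinuity of the norm, in eventual form. -/
lemma weak_norm_eventually_le {X : Type*} [NormedAddCommGroup X] [InnerProductSpace ℝ X]
    {x : ℕ → X} {l : X} (h : WeakTendsto x l) {δ : ℝ} (hδ : 0 < δ) :
    ∀ᶠ n in atTop, ‖l‖ ≤ ‖x n‖ + δ := by
  rcases eq_or_ne l 0 with rfl | hl
  · exact Eventually.of_forall fun n => by rw [norm_zero]; positivity
  · have hln : 0 < ‖l‖ := norm_pos_iff.mpr hl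
    have h1 : Tendsto (fun n => ⟪l, x n⟫) atTop (nhds (‖l‖ ^ 2)) := by
      simpa [real_inner_self_eq_norm_sq] using h l
    have h2 : ∀ᶠ n in atTop, ‖l‖ ^ 2 - δ * ‖l‖ < ⟪l, x n⟫ :=
      h1.eventually (eventually_gt_nhds (by nlinarith))
    filter_upwards [h2] with n hn
    have h3 : ⟪l, x n⟫ ≤ ‖l‖ * ‖x n‖ := real_inner_le_norm _ _
    nlinarith

/-- Weak closedness of the graph of a closed linear operator. -/
lemma graph_weak_closed {X Z : Type*}
    [NormedAddCommGroup X] [InnerProductSpace ℝ X] [CompleteSpace X]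
    [NormedAddCommGroup Z] [InnerProductSpace ℝ Z] [CompleteSpace Z]
    (domL : Submodule ℝ X) (L : domL →ₗ[ℝ] Z)
    (hLgraph : IsClosed {p : X × Z | ∃ h : p.1 ∈ domL, L ⟨p.1, h⟩ = p.2})
    {x : ℕ → X} {z : ℕ → Z} {l : X} {zl : Z}
    (hmem : ∀ n, ∃ h : x n ∈ domL, L ⟨x n, h⟩ = z n)
    (hx : WeakTendsto x l) (hz : WeakTendsto z zl) :
    ∃ h : l ∈ domL, L ⟨l, h⟩ = zl := by
  set G : Submodule ℝ (WithLp 2 (X × Z)) :=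
    { carrier := {p | ∃ h : p.fst ∈ domL, L ⟨p.fst, h⟩ = p.snd}
      add_mem' := by
        rintro a b ⟨ha, hLa⟩ ⟨hb, hLb⟩
        refine ⟨by rw [WithLp.add_fst]; exact domL.add_mem ha hb, ?_⟩
        have he : (⟨(a + b).fst, by rw [WithLp.add_fst]; exact domL.add_mem ha hb⟩ : domL)
            = ⟨a.fst, ha⟩ + ⟨b.fst, hb⟩ := by
          ext; simp [WithLp.add_fst]
        rw [he, map_add, hLa, hLb, WithLp.add_snd]
      zero_mem' := by
        refine ⟨by rw [WithLp.zero_fst]; exact domL.zero_mem, ?_⟩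
        have he : (⟨(0 : WithLp 2 (X × Z)).fst, by rw [WithLp.zero_fst]; exact domL.zero_mem⟩
            : domL) = 0 := by ext; simp [WithLp.zero_fst]
        rw [he, map_zero, WithLp.zero_snd]
      smul_mem' := by
        rintro c a ⟨ha, hLa⟩
        refine ⟨by rw [WithLp.smul_fst]; exact domL.smul_mem c ha, ?_⟩
        have he : (⟨(c • a).fst, by rw [WithLp.smul_fst]; exact domL.smul_mem c ha⟩ : domL)
            = c • (⟨a.fst, ha⟩ : domL) := by ext; simp [WithLp.smul_fst]
        rw [he, LinearMap.map_smul, hLa, WithLp.smul_snd] } with hG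
  have hGclosed : IsClosed (G : Set (WithLp 2 (X × Z))) := by
    have heq : (G : Set (WithLp 2 (X × Z)))
        = (WithLp.equiv 2 (X × Z)) ⁻¹'
          {p : X × Z | ∃ h : p.1 ∈ domL, L ⟨p.1, h⟩ = p.2} := rfl
    rw [heq]
    exact hLgraph.preimage (WithLp.prod_continuous_ofLp 2 X Z)
  haveI : CompleteSpace G := hGclosed.completeSpace_coe
  set pstar : WithLp 2 (X × Z) := (WithLp.equiv 2 (X × Z)).symm (l, zl) with hpstar
  have hmemG : pstar ∈ Gᗮᗮ := by
    rw [Submodule.mem_orthogonal]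
    intro u hu
    have hconv : Tendsto (fun n => ⟪u, (WithLp.equiv 2 (X × Z)).symm (x n, z n)⟫)
        atTop (nhds ⟪u, pstar⟫) := by
      have e1 : ∀ n, ⟪u, (WithLp.equiv 2 (X × Z)).symm (x n, z n)⟫
          = ⟪u.fst, x n⟫ + ⟪u.snd, z n⟫ := by
        intro n
        rw [WithLp.prod_inner_apply, WithLp.equiv_symm_apply, WithLp.toLp_fst, WithLp.toLp_snd]
      have e2 : ⟪u, pstar⟫ = ⟪u.fst, l⟫ + ⟪u.snd, zl⟫ := by
        rw [hpstar, WithLp.prod_inner_apply, WithLp.equiv_symm_apply, WithLp.toLp_fst, WithLp.toLp_snd]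
      simp only [e1, e2]
      exact (hx u.fst).add (hz u.snd)
    have hzero : ∀ n, ⟪u, (WithLp.equiv 2 (X × Z)).symm (x n, z n)⟫ = 0 := by
      intro n
      have hmemn : (WithLp.equiv 2 (X × Z)).symm (x n, z n) ∈ G := hmem n
      have := (Submodule.mem_orthogonal G u).mp hu _ hmemn
      rwa [real_inner_comm] at this
    exact tendsto_nhds_unique (by simpa only [hzero] using hconv : Tendsto (fun _ : ℕ => (0:ℝ))
        atTop (nhds ⟪u, pstar⟫)) tendsto_const_nhds
  rw [Submodule.orthogonal_orthogonal] at hmemG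
  exact hmemG

/-- **Well-posedness of Tikhonov regularization (existence of minimizers).**
Let `X`, `Y`, `Z` be real Hilbert spaces, `D ⊆ X` nonempty, bounded, closed and convex,
`L : dom L ⊆ X → Z` a closed linear operator with `D ∩ dom L ≠ ∅`, and `F : D → Y`
weakly sequentially closed.  Then for every `v ∈ Y` and every `λ > 0` the Tikhonov
functional `T_{v,λ}` attains its minimum on `X`. -/
theorem tikhonov_exists_minimizer
    {X Y Z : Type*}
    [NormedAddCommGroup X] [InnerProductSpace ℝ X] [CompleteSpace X]
    [NormedAddCommGroup Y] [InnerProductSpace ℝ Y] [CompleteSpace Y]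
    [NormedAddCommGroup Z] [InnerProductSpace ℝ Z] [CompleteSpace Z]
    (D : Set X) (hDne : D.Nonempty) (hDbdd : Bornology.IsBounded D)
    (hDclosed : IsClosed D) (hDconvex : Convex ℝ D)
    (domL : Submodule ℝ X) (L : domL →ₗ[ℝ] Z)
    (hLgraph : IsClosed {p : X × Z | ∃ h : p.1 ∈ domL, L ⟨p.1, h⟩ = p.2})
    (hmeet : ∃ μ, μ ∈ D ∧ μ ∈ domL)
    (F : X → Y) (hF : WeaklySeqClosedOn F D)
    (v : Y) (lam : ℝ) (hlam : 0 < lam) :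
    ∃ μstar, μstar ∈ D ∧ μstar ∈ domL ∧
      ∀ μ : X, tikhonovFunctional D domL L F v lam μstar
        ≤ tikhonovFunctional D domL L F v lam μ := by
  classical
  set T : X → ℝ≥0∞ := tikhonovFunctional D domL L F v lam with hT
  set m : ℝ≥0∞ := ⨅ μ : X, T μ with hm
  obtain ⟨μ₀, hμ₀D, hμ₀L⟩ := hmeet
  have hmle : m ≤ T μ₀ := iInf_le _ _
  have hmtop : m ≠ ⊤ := by
    refine ne_top_of_le_ne_top ?_ hmle
    rw [hT]
    unfold tikhonovFunctional
    rw [dif_pos ⟨hμ₀D, hμ₀L⟩]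
    exact ENNReal.ofReal_ne_top
  -- choose a minimizing sequence
  have hseq : ∀ n : ℕ, ∃ μ, (μ ∈ D ∧ μ ∈ domL) ∧
      T μ < m + ENNReal.ofReal (1 / ((n : ℝ) + 1)) := by
    intro n
    have hlt : m < m + ENNReal.ofReal (1 / ((n : ℝ) + 1)) :=
      ENNReal.lt_add_right hmtop (ENNReal.ofReal_pos.mpr (by positivity)).ne'
    obtain ⟨μ, hμ⟩ := iInf_lt_iff.mp hlt
    refine ⟨μ, ?_, hμ⟩
    by_contra hc
    have : T μ = ⊤ := by rw [hT]; unfold tikhonovFunctional; rw [dif_neg hc]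
    rw [this] at hμ
    exact absurd hμ (not_lt.mpr le_top)
  choose μs hmem hlt using hseq
  set a : ℕ → ℝ := fun n => ‖F (μs n) - v‖ with ha
  set b : ℕ → ℝ := fun n => ‖L ⟨μs n, (hmem n).2⟩‖ with hb
  have hTval : ∀ n, T (μs n)
      = ENNReal.ofReal ((1 / 2) * a n ^ 2 + (lam / 2) * b n ^ 2) := by
    intro n
    rw [hT]
    unfold tikhonovFunctional
    rw [dif_pos (hmem n)]
  have hcost : ∀ n, (1 / 2) * a n ^ 2 + (lam / 2) * b n ^ 2
      ≤ m.toReal + 1 / ((n : ℝ) + 1) := by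
    intro n
    have h1 : T (μs n) < ENNReal.ofReal (m.toReal + 1 / ((n : ℝ) + 1)) := by
      calc T (μs n) < m + ENNReal.ofReal (1 / ((n : ℝ) + 1)) := hlt n
        _ = ENNReal.ofReal m.toReal + ENNReal.ofReal (1 / ((n : ℝ) + 1)) := by
            rw [ENNReal.ofReal_toReal hmtop]
        _ = ENNReal.ofReal (m.toReal + 1 / ((n : ℝ) + 1)) :=
            (ENNReal.ofReal_add ENNReal.toReal_nonneg (by positivity)).symm
    rw [hTval n] at h1
    exact le_of_lt ((ENNReal.ofReal_lt_ofReal_iff (by positivity)).mp h1)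
  set B : ℝ := m.toReal + 1 with hB
  have hB0 : 0 < B := by
    have := ENNReal.toReal_nonneg (a := m); rw [hB]; linarith
  have hKn : ∀ n, (1 / 2) * a n ^ 2 + (lam / 2) * b n ^ 2 ≤ B := by
    intro n
    refine (hcost n).trans ?_
    have h1 : (1 : ℝ) / ((n : ℝ) + 1) ≤ 1 := by
      rw [div_le_one (by positivity)]
      have : (0 : ℝ) ≤ (n : ℝ) := Nat.cast_nonneg n
      linarith
    rw [hB]; linarith
  set Ka : ℝ := Real.sqrt (2 * B) with hKa
  set Kb : ℝ := Real.sqrt (2 * B / lam) with hKb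
  have han : ∀ n, a n ≤ Ka := by
    intro n
    have h2 : a n ^ 2 ≤ 2 * B := by nlinarith [hKn n, sq_nonneg (b n)]
    calc a n = Real.sqrt (a n ^ 2) := (Real.sqrt_sq (norm_nonneg _)).symm
      _ ≤ Ka := Real.sqrt_le_sqrt h2
  have hbn : ∀ n, b n ≤ Kb := by
    intro n
    have h2 : b n ^ 2 ≤ 2 * B / lam := by
      rw [le_div_iff₀ hlam]
      nlinarith [hKn n, sq_nonneg (a n)]
    calc b n = Real.sqrt (b n ^ 2) := (Real.sqrt_sq (norm_nonneg _)).symm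
      _ ≤ Kb := Real.sqrt_le_sqrt h2
  have hKa0 : 0 ≤ Ka := Real.sqrt_nonneg _
  have hKb0 : 0 ≤ Kb := Real.sqrt_nonneg _
  -- bounds for the three sequences
  obtain ⟨R, hR⟩ := isBounded_iff_forall_norm_le.mp hDbdd
  have hμsb : ∀ n, ‖μs n‖ ≤ R := fun n => hR _ (hmem n).1
  have hFb : ∀ n, ‖F (μs n)‖ ≤ Ka + ‖v‖ := by
    intro n
    calc ‖F (μs n)‖ = ‖(F (μs n) - v) + v‖ := by rw [sub_add_cancel]
      _ ≤ ‖F (μs n) - v‖ + ‖v‖ := norm_add_le _ _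
      _ ≤ Ka + ‖v‖ := by have := han n; rw [ha] at this; linarith
  set ℓ : ℕ → Z := fun n => L ⟨μs n, (hmem n).2⟩ with hℓ
  have hℓb : ∀ n, ‖ℓ n‖ ≤ Kb := hbn
  -- subsequence extraction
  obtain ⟨φ₁, hφ₁, μstar, hμw⟩ := exists_weak_subseq μs R hμsb
  obtain ⟨φ₂, hφ₂, yw, hyw⟩ :=
    exists_weak_subseq (fun n => F (μs (φ₁ n))) (Ka + ‖v‖) (fun n => hFb _)
  obtain ⟨φ₃, hφ₃, zw, hzw⟩ :=
    exists_weak_subseq (fun n => ℓ (φ₁ (φ₂ n))) Kb (fun n => hℓb _)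
  set ψ : ℕ → ℕ := fun n => φ₁ (φ₂ (φ₃ n)) with hψ
  have hψmono : StrictMono ψ := hφ₁.comp (hφ₂.comp hφ₃)
  have hν : WeakTendsto (fun n => μs (ψ n)) μstar := (hμw.subseq hφ₂).subseq hφ₃
  have hFν : WeakTendsto (fun n => F (μs (ψ n))) yw := hyw.subseq hφ₃
  have hzν : WeakTendsto (fun n => ℓ (ψ n)) zw := hzw
  obtain ⟨hDstar, hFeq⟩ :=
    hF (fun n => μs (ψ n)) μstar yw (fun n => (hmem _).1) hν hFν
  obtain ⟨hdom, hLeq⟩ := graph_weak_closed domL L hLgraph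
    (x := fun n => μs (ψ n)) (z := fun n => ℓ (ψ n))
    (fun n => ⟨(hmem (ψ n)).2, rfl⟩) hν hzν
  have hFshift : WeakTendsto (fun n => F (μs (ψ n)) - v) (yw - v) := by
    intro w
    have := (hFν w).sub (tendsto_const_nhds (x := ⟪w, v⟫) (f := atTop))
    simpa [inner_sub_right] using this
  refine ⟨μstar, hDstar, hdom, fun μ => ?_⟩
  have hTstar : T μstar
      = ENNReal.ofReal ((1 / 2) * ‖yw - v‖ ^ 2 + (lam / 2) * ‖zw‖ ^ 2) := by
    rw [hT]
    unfold tikhonovFunctional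
    rw [dif_pos ⟨hDstar, hdom⟩]
    have h1 : L ⟨μstar, (⟨hDstar, hdom⟩ : μstar ∈ D ∧ μstar ∈ domL).2⟩ = zw := hLeq
    rw [hFeq, h1]
  have key : (1 / 2) * ‖yw - v‖ ^ 2 + (lam / 2) * ‖zw‖ ^ 2 ≤ m.toReal := by
    refine le_of_forall_pos_le_add ?_
    intro ε hε
    set Csum : ℝ := Ka + lam * Kb + (1 + lam) / 2 + 1 with hCsum
    have hCsum0 : 0 < Csum := by
      rw [hCsum]; nlinarith [mul_nonneg hlam.le hKb0]
    set δ : ℝ := min 1 (ε / (2 * Csum)) with hδdef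
    have hδ0 : 0 < δ := lt_min one_pos (by positivity)
    have hδ1 : δ ≤ 1 := min_le_left _ _
    have hδ2 : δ * Csum ≤ ε / 2 := by
      have h1 : δ ≤ ε / (2 * Csum) := min_le_right _ _
      calc δ * Csum ≤ ε / (2 * Csum) * Csum :=
            mul_le_mul_of_nonneg_right h1 hCsum0.le
        _ = ε / 2 := by field_simp
    have E1 := weak_norm_eventually_le hFshift hδ0
    have E2 := weak_norm_eventually_le hzν hδ0
    obtain ⟨N, hN⟩ := exists_nat_one_div_lt (half_pos hε)
    have E3 : ∀ᶠ n in atTop, 1 / ((ψ n : ℝ) + 1) ≤ ε / 2 := by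
      filter_upwards [eventually_ge_atTop N] with n hn
      have h1 : (N : ℝ) ≤ (ψ n : ℝ) := by
        exact_mod_cast le_trans hn (hψmono.le_apply)
      have h2 : 1 / ((ψ n : ℝ) + 1) ≤ 1 / ((N : ℝ) + 1) := by
        apply one_div_le_one_div_of_le (by positivity)
        linarith
      exact h2.trans hN.le
    obtain ⟨n, ⟨hn1, hn2⟩, hn3⟩ := ((E1.and E2).and E3).exists
    have hA : ‖yw - v‖ ≤ a (ψ n) + δ := hn1
    have hBb : ‖zw‖ ≤ b (ψ n) + δ := hn2
    have hc : (1 / 2) * a (ψ n) ^ 2 + (lam / 2) * b (ψ n) ^ 2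
        ≤ m.toReal + ε / 2 := (hcost (ψ n)).trans (by linarith)
    have h5 : δ * a (ψ n) ≤ δ * Ka := mul_le_mul_of_nonneg_left (han _) hδ0.le
    have h6 : δ * b (ψ n) ≤ δ * Kb := mul_le_mul_of_nonneg_left (hbn _) hδ0.le
    have h7 : δ * δ ≤ δ := mul_le_of_le_one_left hδ0.le hδ1
    have hsq1 : ‖yw - v‖ ^ 2 ≤ (a (ψ n) + δ) ^ 2 :=
      pow_le_pow_left₀ (norm_nonneg _) hA 2
    have hsq2 : ‖zw‖ ^ 2 ≤ (b (ψ n) + δ) ^ 2 :=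
      pow_le_pow_left₀ (norm_nonneg _) hBb 2
    have hδK : δ * Ka + lam * (δ * Kb) + (1 + lam) / 2 * δ ≤ ε / 2 := by
      have : δ * Csum = δ * Ka + lam * (δ * Kb) + (1 + lam) / 2 * δ + δ := by
        rw [hCsum]; ring
      linarith
    have e1 : (1 / 2) * ‖yw - v‖ ^ 2 ≤ (1 / 2) * (a (ψ n) + δ) ^ 2 :=
      mul_le_mul_of_nonneg_left hsq1 (by norm_num)
    have e2 : (lam / 2) * ‖zw‖ ^ 2 ≤ (lam / 2) * (b (ψ n) + δ) ^ 2 :=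
      mul_le_mul_of_nonneg_left hsq2 (by linarith)
    have expand : (1 / 2) * (a (ψ n) + δ) ^ 2 + (lam / 2) * (b (ψ n) + δ) ^ 2
        = (1 / 2) * a (ψ n) ^ 2 + (lam / 2) * b (ψ n) ^ 2
          + (δ * a (ψ n) + lam * (δ * b (ψ n)) + (1 + lam) / 2 * (δ * δ)) := by
      ring
    have e3 : (1 + lam) / 2 * (δ * δ) ≤ (1 + lam) / 2 * δ :=
      mul_le_mul_of_nonneg_left h7 (by linarith)
    have e4 : lam * (δ * b (ψ n)) ≤ lam * (δ * Kb) :=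
      mul_le_mul_of_nonneg_left h6 hlam.le
    linarith
  rw [hTstar]
  calc ENNReal.ofReal ((1 / 2) * ‖yw - v‖ ^ 2 + (lam / 2) * ‖zw‖ ^ 2)
      ≤ ENNReal.ofReal m.toReal := ENNReal.ofReal_le_ofReal key
    _ = m := ENNReal.ofReal_toReal hmtop
    _ ≤ T μ := iInf_le _ μ
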